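/- arXiv:2305.00254 — 5 statements merged into one kernel-verified Lean document; each statement's English description precedes it below -/
import Mathlib

section
/- Let X₁, …, X_n be i.i.d. Bernoulli(p) random variables with p ∈ [0,1], n ≥ 3, and let p̂ = (1/n)·∑_{i=1}^n X_i. Then for every δ ∈ (0,1), with probability at least 1 − 2δ, |p − p̂| ≤ min{ √(2·p̂·(1−p̂)·log(4/δ)/n) + 4·log(4/δ)/n , √(log(2/δ)/(2n)) }. -/
/-!
Both bounds are two-sided Chernoff bounds for the centred sum `∑ (Xᵢ - p)`, with each tail
failing with probability `δ / 4` (Bernstein) resp. `δ / 2` (Hoeffding), `3δ/2` in total.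
Hoeffding's lemma gives `|p - p̂| ≤ √(log (2/δ) / (2n))`. Bennett's bound
`𝔼 exp (t (X - p)) ≤ exp (p (1 - p) (e^|t| - 1 - |t|))`, together with
`eᵗ - 1 - t ≤ t² / (2 (1 - t/3))`, gives Bernstein's inequality
`|p - p̂| ≤ √(2 p (1 - p) L / n) + 2L / (3n)` with `L = log (4/δ)`. Since
`p (1 - p) ≤ p̂ (1 - p̂) + |p - p̂|`, this is a quadratic inequality in `|p - p̂|`; solving it
replaces the unknown variance by its empirical counterpart at the cost of raising `2L / (3n)` to
`4L / n`.
-/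

open MeasureTheory ProbabilityTheory Real

lemma apply_zero_le_of_hasDerivAt_nonneg {f f' : ℝ → ℝ} (hf : ∀ t, HasDerivAt f (f' t) t)
    (hf' : ∀ t, 0 ≤ t → 0 ≤ f' t) {t : ℝ} (ht : 0 ≤ t) : f 0 ≤ f t := by
  refine monotoneOn_of_deriv_nonneg (convex_Ici 0)
    (fun x _ => (hf x).continuousAt.continuousWithinAt)
    (fun x _ => (hf x).differentiableAt.differentiableWithinAt) (fun x hx => ?_)
    Set.self_mem_Ici (Set.mem_Ici.2 ht) ht
  rw [(hf x).deriv]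
  exact hf' x (interior_subset hx)

lemma two_add_add_sub_two_mul_exp_nonneg {t : ℝ} (ht : 0 ≤ t) :
    0 ≤ 2 + t + (t - 2) * exp t := by
  have hderiv (x : ℝ) : HasDerivAt (fun t => 2 + t + (t - 2) * exp t) (1 + (x - 1) * exp x) x :=
    (((hasDerivAt_id' x).const_add 2).add
      (((hasDerivAt_id' x).sub_const 2).mul (hasDerivAt_exp x))).congr_deriv (by ring)
  have hpos (x : ℝ) : 0 ≤ 1 + (x - 1) * exp x := by
    have hx : exp (-x) * exp x = 1 := by rw [← exp_add, neg_add_cancel, exp_zero]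
    nlinarith [add_one_le_exp (-x), exp_pos x]
  simpa using apply_zero_le_of_hasDerivAt_nonneg hderiv (fun x _ => hpos x) ht

/-- Equivalently `exp t - 1 - t ≤ t ^ 2 / (2 * (1 - t / 3))` for `0 ≤ t < 3`. -/
lemma exp_mul_three_sub_le {t : ℝ} (ht : 0 ≤ t) : exp t * (3 - t) ≤ 3 + 2 * t + t ^ 2 / 2 := by
  have hderiv (x : ℝ) : HasDerivAt (fun t => 3 + 2 * t + t ^ 2 / 2 - exp t * (3 - t))
      (2 + x + (x - 2) * exp x) x :=
    ((((hasDerivAt_id' x).const_mul 2).const_add 3).add ((hasDerivAt_pow 2 x).div_const 2)).sub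
      ((hasDerivAt_exp x).mul ((hasDerivAt_id' x).const_sub 3)) |>.congr_deriv (by push_cast; ring)
  have h := apply_zero_le_of_hasDerivAt_nonneg hderiv
    (fun x hx => two_add_add_sub_two_mul_exp_nonneg hx) ht
  norm_num at h
  linarith

lemma one_sub_add_mul_exp_pos {p : ℝ} (hp : p ∈ Set.Icc (0:ℝ) 1) (t : ℝ) :
    0 < 1 - p + p * exp t := by
  rcases hp.1.eq_or_lt with rfl | h
  · simp
  · nlinarith [hp.2, mul_pos h (exp_pos t)]

lemma log_one_sub_add_mul_exp_le {p t : ℝ} (hp : p ∈ Set.Icc (0:ℝ) 1) (ht : 0 ≤ t) :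
    log (1 - p + p * exp t) ≤ p * t + p * (1 - p) * (exp t - 1 - t) := by
  have hD := one_sub_add_mul_exp_pos hp
  have hderiv (x : ℝ) : HasDerivAt
      (fun s => p * s + p * (1 - p) * (exp s - 1 - s) - log (1 - p + p * exp s))
      (p + p * (1 - p) * (exp x - 1) - p * exp x / (1 - p + p * exp x)) x :=
    (((hasDerivAt_id' x).const_mul p).add
      ((((hasDerivAt_exp x).sub_const 1).sub (hasDerivAt_id' x)).const_mul (p * (1 - p)))).sub
      ((((hasDerivAt_exp x).const_mul p).const_add (1 - p)).log (hD x).ne') |>.congr_deriv (by ring)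
  have hnonneg (x : ℝ) (hx : 0 ≤ x) :
      0 ≤ p + p * (1 - p) * (exp x - 1) - p * exp x / (1 - p + p * exp x) := by
    have hE : 1 ≤ exp x := one_le_exp hx
    rw [sub_nonneg, div_le_iff₀ (hD x)]
    nlinarith [mul_nonneg (mul_nonneg (mul_nonneg hp.1 hp.1) (sub_nonneg.2 hp.2))
      (sq_nonneg (exp x - 1))]
  have h := apply_zero_le_of_hasDerivAt_nonneg hderiv hnonneg ht
  simp only [mul_zero, exp_zero, sub_self, add_zero, mul_one, sub_add_cancel, log_one] at h
  linarith

lemma centered_bernoulli_mgf_le_of_nonneg {p t : ℝ} (hp : p ∈ Set.Icc (0:ℝ) 1) (ht : 0 ≤ t) :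
    p * exp (t * (1 - p)) + (1 - p) * exp (t * -p) ≤ exp (p * (1 - p) * (exp t - 1 - t)) := by
  have h : p * exp (t * (1 - p)) + (1 - p) * exp (t * -p)
      = exp (log (1 - p + p * exp t) + t * -p) := by
    rw [show t * (1 - p) = t + t * -p by ring, exp_add, exp_add,
      exp_log (one_sub_add_mul_exp_pos hp t)]
    ring
  rw [h, exp_le_exp]
  linarith [log_one_sub_add_mul_exp_le hp ht]

lemma centered_bernoulli_mgf_le {p : ℝ} (hp : p ∈ Set.Icc (0:ℝ) 1) (t : ℝ) :
    p * exp (t * (1 - p)) + (1 - p) * exp (t * -p) ≤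
      exp (p * (1 - p) * (exp |t| - 1 - |t|)) := by
  rcases le_total 0 t with ht | ht
  · rw [abs_of_nonneg ht]
    exact centered_bernoulli_mgf_le_of_nonneg hp ht
  · rw [abs_of_nonpos ht]
    -- `p - X` is a centred Bernoulli variable of parameter `1 - p`
    convert centered_bernoulli_mgf_le_of_nonneg (p := 1 - p)
      ⟨by linarith [hp.2], by linarith [hp.1]⟩ (neg_nonneg.2 ht) using 1 <;> ring_nf

lemma exists_bernstein_exponent {v L : ℝ} (hv : 0 ≤ v) (hL : 0 < L) :
    ∃ u, 0 ≤ u ∧ v * (exp u - 1 - u) - u * (√(2 * v * L) + 2 * L / 3) ≤ -L := by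
  set r := √(2 * v * L)
  set s := r + 2 * L / 3
  have hr : 0 ≤ r := sqrt_nonneg _
  have hr2 : r ^ 2 = 2 * v * L := sq_sqrt (by positivity)
  have hd : 0 < 3 * v + s := by positivity
  obtain ⟨u, hus⟩ : ∃ u, u * (3 * v + s) = 3 * s := ⟨3 * s / (3 * v + s), by field_simp⟩
  have hu : 0 ≤ u := nonneg_of_mul_nonneg_left (by rw [hus]; positivity) hd
  have hE : (exp u - 1 - u) * (3 - u) ≤ 3 / 2 * u ^ 2 := by nlinarith [exp_mul_three_sub_le hu]
  refine ⟨u, hu, le_of_mul_le_mul_right ?_ hd⟩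
  have hcross : 0 ≤ L * r := by positivity
  have h3u : (3 - u) * (3 * v + s) = 9 * v := by linear_combination -hus
  have hs : s = r + 2 * L / 3 := rfl
  calc (v * (exp u - 1 - u) - u * s) * (3 * v + s)
      = ((exp u - 1 - u) * (3 - u) * (3 * v + s) ^ 2) / 9 - s * (u * (3 * v + s)) := by
        linear_combination (-(exp u - 1 - u) * (3 * v + s) / 9) * h3u
    _ ≤ (3 / 2 * u ^ 2 * (3 * v + s) ^ 2) / 9 - s * (3 * s) := by rw [hus]; gcongr
    _ = - (3 / 2) * s ^ 2 := by rw [mul_assoc, ← mul_pow, hus]; ring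
    _ ≤ -L * (3 * v + s) := by nlinarith

lemma le_add_of_sq_le_mul_add_sq {x a c : ℝ} (ha : 0 ≤ a) (hc : 0 ≤ c)
    (h : x ^ 2 ≤ a * x + c ^ 2) : x ≤ a + c := by
  by_contra! hx
  nlinarith [mul_lt_mul_of_pos_left hx (by linarith : 0 < x)]

lemma mul_one_sub_le_mul_one_sub_add_abs {p q : ℝ} (hp : p ∈ Set.Icc (0:ℝ) 1)
    (hq : q ∈ Set.Icc (0:ℝ) 1) : p * (1 - p) ≤ q * (1 - q) + |p - q| := by
  have h : |1 - p - q| ≤ 1 := abs_le.2 ⟨by linarith [hp.2, hq.2], by linarith [hp.1, hq.1]⟩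
  calc p * (1 - p) = q * (1 - q) + (p - q) * (1 - p - q) := by ring
    _ ≤ q * (1 - q) + |p - q| * |1 - p - q| := by
        rw [← abs_mul]; gcongr; exact le_abs_self _
    _ ≤ q * (1 - q) + |p - q| := by
        gcongr; exact mul_le_of_le_one_right (abs_nonneg _) h

lemma abs_sub_le_of_abs_sub_le_bernstein {p q L : ℝ} (hp : p ∈ Set.Icc (0:ℝ) 1)
    (hq : q ∈ Set.Icc (0:ℝ) 1) (hL : 0 ≤ L)
    (h : |p - q| ≤ √(2 * (p * (1 - p)) * L) + 2 * L / 3) :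
    |p - q| ≤ √(2 * q * (1 - q) * L) + 4 * L := by
  set s := |p - q|
  set r := √(2 * q * (1 - q) * L)
  have hv : 0 ≤ q * (1 - q) := mul_nonneg hq.1 (sub_nonneg.2 hq.2)
  have hr2 : r ^ 2 = 2 * q * (1 - q) * L := sq_sqrt (by nlinarith [mul_nonneg hv hL])
  rcases le_or_gt s (2 * L / 3) with hs | hs
  · have : 0 ≤ r := sqrt_nonneg _
    linarith
  have hx : s - 2 * L / 3 ≤ √(2 * L * (q * (1 - q) + s)) := by
    calc s - 2 * L / 3 ≤ √(2 * (p * (1 - p)) * L) := by linarith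
      _ ≤ _ := sqrt_le_sqrt (by nlinarith [mul_one_sub_le_mul_one_sub_add_abs hp hq])
  have hsq : (s - 2 * L / 3) ^ 2 ≤ 2 * L * (s - 2 * L / 3) + (r + 4 * L / 3) ^ 2 := by
    have := pow_le_pow_left₀ (by linarith) hx 2
    rw [sq_sqrt (by positivity)] at this
    nlinarith [sqrt_nonneg (2 * q * (1 - q) * L)]
  linarith [le_add_of_sq_le_mul_add_sq (by positivity) (by positivity) hsq]

lemma inv_mul_sum_mem_Icc {ι : Type*} [Fintype ι] {x : ι → ℝ}
    (hx : ∀ i, x i ∈ Set.Icc (0:ℝ) 1) : (Fintype.card ι : ℝ)⁻¹ * ∑ i, x i ∈ Set.Icc (0:ℝ) 1 := by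
  refine ⟨mul_nonneg (by positivity) (Finset.sum_nonneg fun i _ => (hx i).1), ?_⟩
  rcases (Fintype.card ι).eq_zero_or_pos with h | h
  · simp [h]
  calc (Fintype.card ι : ℝ)⁻¹ * ∑ i, x i ≤ (Fintype.card ι : ℝ)⁻¹ * ∑ _i : ι, 1 := by
        gcongr with i; exact (hx i).2
    _ = 1 := by simp [h.ne']

lemma abs_sub_inv_mul_sum {ι : Type*} [Fintype ι] [Nonempty ι] (x : ι → ℝ) (p : ℝ) :
    |p - (Fintype.card ι : ℝ)⁻¹ * ∑ i, x i| = |∑ i, (x i - p)| / Fintype.card ι := by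
  have hcard : (0:ℝ) < Fintype.card ι := by positivity
  rw [Finset.sum_sub_distrib, Finset.sum_const, Finset.card_univ, nsmul_eq_mul, abs_sub_comm,
    ← abs_of_pos hcard, ← abs_div, abs_of_pos hcard]
  congr 1
  field_simp

noncomputable def bernoulliLaw (p : ℝ) : Measure ℝ :=
  ENNReal.ofReal p • Measure.dirac 1 + ENNReal.ofReal (1 - p) • Measure.dirac 0

lemma integral_bernoulliLaw {p : ℝ} (hp : p ∈ Set.Icc (0:ℝ) 1) (f : ℝ → ℝ) :
    ∫ x, f x ∂bernoulliLaw p = p * f 1 + (1 - p) * f 0 := by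
  rw [bernoulliLaw, integral_add_measure
      ((integrable_dirac (by simp)).smul_measure ENNReal.ofReal_ne_top)
      ((integrable_dirac (by simp)).smul_measure ENNReal.ofReal_ne_top),
    integral_smul_measure, integral_smul_measure, integral_dirac, integral_dirac,
    ENNReal.toReal_ofReal hp.1, ENNReal.toReal_ofReal (sub_nonneg.2 hp.2), smul_eq_mul, smul_eq_mul]

section Bernoulli

variable {Ω : Type*} [MeasurableSpace Ω] {μ : Measure Ω} {Y : Ω → ℝ} {p : ℝ}

lemma ae_mem_Icc_of_map_eq_bernoulliLaw (hY : Measurable Y) (hlaw : μ.map Y = bernoulliLaw p) :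
    ∀ᵐ ω ∂μ, Y ω ∈ Set.Icc (0:ℝ) 1 := by
  refine ae_of_ae_map hY.aemeasurable ?_
  rw [hlaw, bernoulliLaw, ae_add_measure_iff]
  constructor <;> refine Measure.ae_smul_measure ((ae_dirac_iff measurableSet_Icc).2 ?_) _ <;> simp

lemma integral_comp_of_map_eq_bernoulliLaw (hY : Measurable Y) (hlaw : μ.map Y = bernoulliLaw p)
    (hp : p ∈ Set.Icc (0:ℝ) 1) {f : ℝ → ℝ} (hf : Measurable f) :
    ∫ ω, f (Y ω) ∂μ = p * f 1 + (1 - p) * f 0 := by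
  rw [← integral_map hY.aemeasurable hf.aestronglyMeasurable, hlaw, integral_bernoulliLaw hp]

lemma mgf_sub_le_of_map_eq_bernoulliLaw (hY : Measurable Y) (hlaw : μ.map Y = bernoulliLaw p)
    (hp : p ∈ Set.Icc (0:ℝ) 1) (t : ℝ) :
    mgf (fun ω => Y ω - p) μ t ≤ exp (p * (1 - p) * (exp |t| - 1 - |t|)) := by
  rw [mgf, integral_comp_of_map_eq_bernoulliLaw (f := fun x => exp (t * (x - p))) hY hlaw hp
    (by fun_prop), zero_sub]
  exact centered_bernoulli_mgf_le hp t

lemma hasSubgaussianMGF_sub_of_map_eq_bernoulliLaw [IsProbabilityMeasure μ] (hY : Measurable Y)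
    (hlaw : μ.map Y = bernoulliLaw p) (hp : p ∈ Set.Icc (0:ℝ) 1) :
    HasSubgaussianMGF (fun ω => Y ω - p) (1 / 4) μ := by
  have hmean : μ[Y] = p := by
    simpa using integral_comp_of_map_eq_bernoulliLaw hY hlaw hp measurable_id
  have h := hasSubgaussianMGF_of_mem_Icc hY.aemeasurable (ae_mem_Icc_of_map_eq_bernoulliLaw hY hlaw)
  rw [hmean] at h
  convert h using 1
  norm_num

end Bernoulli

lemma ProbabilityTheory.iIndepFun.sub_const {Ω ι : Type*} [MeasurableSpace Ω] {μ : Measure Ω}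
    {X : ι → Ω → ℝ} (hindep : iIndepFun X μ) (c : ℝ) : iIndepFun (fun i ω => X i ω - c) μ :=
  hindep.comp (fun _ x => x - c) fun _ => measurable_id.sub_const c

section Sums

variable {Ω : Type*} [MeasurableSpace Ω] {μ : Measure Ω} [IsProbabilityMeasure μ]
  {ι : Type*} [Fintype ι]

lemma measureReal_abs_sum_ge_le_of_iIndepFun {Y : ι → Ω → ℝ} (hindep : iIndepFun Y μ)
    (hmeas : ∀ i, Measurable (Y i)) (hint : ∀ i t, Integrable (fun ω => exp (t * Y i ω)) μ)
    {g : ℝ → ℝ} (hmgf : ∀ i t, mgf (Y i) μ t ≤ exp (g |t|)) {t : ℝ} (ht : 0 ≤ t) (ε : ℝ) :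
    μ.real {ω | ε ≤ |∑ i, Y i ω|} ≤ 2 * exp (-t * ε + Fintype.card ι * g t) := by
  have hint_sum (s : ℝ) : Integrable (fun ω => exp (s * (∑ i, Y i) ω)) μ :=
    hindep.integrable_exp_mul_sum hmeas fun i _ => hint i s
  have hmgf_sum (s : ℝ) : mgf (∑ i, Y i) μ s ≤ exp (Fintype.card ι * g |s|) :=
    calc mgf (∑ i, Y i) μ s = ∏ i, mgf (Y i) μ s := hindep.mgf_sum hmeas _
      _ ≤ ∏ _i : ι, exp (g |s|) := Finset.prod_le_prod (fun _ _ => mgf_nonneg) fun i _ => hmgf i s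
      _ = exp (Fintype.card ι * g |s|) := by rw [Finset.prod_const, Finset.card_univ, exp_nat_mul]
  have hsplit : {ω | ε ≤ |∑ i, Y i ω|} ⊆
      {ω | ε ≤ (∑ i, Y i) ω} ∪ {ω | (∑ i, Y i) ω ≤ -ε} := by
    intro ω hω
    simp only [Set.mem_ofPred_eq, Finset.sum_apply, le_abs'] at hω ⊢
    exact hω.symm
  calc μ.real {ω | ε ≤ |∑ i, Y i ω|}
      ≤ μ.real {ω | ε ≤ (∑ i, Y i) ω} + μ.real {ω | (∑ i, Y i) ω ≤ -ε} :=
        (measureReal_mono hsplit).trans (measureReal_union_le _ _)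
    _ ≤ exp (-t * ε) * mgf (∑ i, Y i) μ t + exp (-(-t) * -ε) * mgf (∑ i, Y i) μ (-t) :=
        add_le_add (measure_ge_le_exp_mul_mgf ε ht (hint_sum t))
          (measure_le_le_exp_mul_mgf (-ε) (neg_nonpos.2 ht) (hint_sum (-t)))
    _ ≤ exp (-t * ε) * exp (Fintype.card ι * g t) + exp (-t * ε) * exp (Fintype.card ι * g t) := by
        rw [neg_mul_neg, neg_mul]
        gcongr
        · simpa [abs_of_nonneg ht] using hmgf_sum t
        · simpa [abs_of_nonneg ht] using hmgf_sum (-t)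
    _ = 2 * exp (-t * ε + Fintype.card ι * g t) := by rw [exp_add]; ring

variable [Nonempty ι] {X : ι → Ω → ℝ} {p : ℝ}

lemma measureReal_abs_sub_mean_ge_le_bernstein (hXm : ∀ i, Measurable (X i))
    (hindep : iIndepFun X μ) (hlaw : ∀ i, μ.map (X i) = bernoulliLaw p)
    (hp : p ∈ Set.Icc (0:ℝ) 1) {L : ℝ} (hL : 0 < L) :
    μ.real {ω | √(2 * (p * (1 - p)) * L) + 2 * L / 3 ≤
        |p - (Fintype.card ι : ℝ)⁻¹ * ∑ i, X i ω|} ≤ 2 * exp (-(Fintype.card ι * L)) := by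
  obtain ⟨u, hu, hexp⟩ := exists_bernstein_exponent (mul_nonneg hp.1 (sub_nonneg.2 hp.2)) hL
  simp_rw [abs_sub_inv_mul_sum, le_div_iff₀' (by positivity : (0:ℝ) < Fintype.card ι)]
  refine (measureReal_abs_sum_ge_le_of_iIndepFun (g := fun s => p * (1 - p) * (exp s - 1 - s))
    (hindep.sub_const p) (fun i => (hXm i).sub_const p)
    (fun i => (hasSubgaussianMGF_sub_of_map_eq_bernoulliLaw (hXm i) (hlaw i) hp).integrable_exp_mul)
    (fun i => mgf_sub_le_of_map_eq_bernoulliLaw (hXm i) (hlaw i) hp) hu _).trans ?_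
  gcongr
  nlinarith

lemma measureReal_abs_sub_mean_ge_le_hoeffding (hXm : ∀ i, Measurable (X i))
    (hindep : iIndepFun X μ) (hlaw : ∀ i, μ.map (X i) = bernoulliLaw p)
    (hp : p ∈ Set.Icc (0:ℝ) 1) {ε : ℝ} (hε : 0 ≤ ε) :
    μ.real {ω | ε ≤ |p - (Fintype.card ι : ℝ)⁻¹ * ∑ i, X i ω|} ≤
      2 * exp (-(2 * Fintype.card ι * ε ^ 2)) := by
  have hsub i := hasSubgaussianMGF_sub_of_map_eq_bernoulliLaw (hXm i) (hlaw i) hp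
  simp_rw [abs_sub_inv_mul_sum, le_div_iff₀' (by positivity : (0:ℝ) < Fintype.card ι)]
  refine (measureReal_abs_sum_ge_le_of_iIndepFun (g := fun t => t ^ 2 / 8) (hindep.sub_const p)
    (fun i => (hXm i).sub_const p) (fun i => (hsub i).integrable_exp_mul)
    (fun i t => ?_) (t := 4 * ε) (by positivity) _).trans_eq ?_
  · refine ((hsub i).mgf_le t).trans_eq ?_
    rw [sq_abs]
    congr 1
    push_cast
    ring
  · congr 2
    ring

end Sums

lemma ofReal_one_sub_le_of_compl_ae_le {Ω : Type*} [MeasurableSpace Ω] {μ : Measure Ω}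
    [IsProbabilityMeasure μ] {s t : Set Ω} {ε : ℝ} (hs : MeasurableSet s) (hμs : μ.real s ≤ ε)
    (hst : sᶜ ≤ᵐ[μ] t) : ENNReal.ofReal (1 - ε) ≤ μ t :=
  calc ENNReal.ofReal (1 - ε) ≤ ENNReal.ofReal (μ.real sᶜ) := by
        rw [probReal_compl_eq_one_sub hs]
        exact ENNReal.ofReal_le_ofReal (by linarith)
    _ = μ sᶜ := ofReal_measureReal
    _ ≤ μ t := measure_mono_ae hst

theorem stmt_1 {Ω : Type*} [MeasurableSpace Ω] (Pr : Measure Ω) [IsProbabilityMeasure Pr]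
    (n : ℕ) (hn : 3 ≤ n) (p : ℝ) (hp : p ∈ Set.Icc (0:ℝ) 1)
    (X : Fin n → Ω → ℝ) (hXm : ∀ i, Measurable (X i))
    (hXindep : iIndepFun X Pr)
    (hXdist : ∀ i, Measure.map (X i) Pr =
      ENNReal.ofReal p • Measure.dirac (1:ℝ) + ENNReal.ofReal (1 - p) • Measure.dirac (0:ℝ))
    (δ : ℝ) (hδ : δ ∈ Set.Ioo (0:ℝ) 1) :
    ENNReal.ofReal (1 - 2 * δ) ≤
      Pr {ω | |p - (n:ℝ)⁻¹ * ∑ i, X i ω| ≤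
        min (Real.sqrt (2 * ((n:ℝ)⁻¹ * ∑ i, X i ω) * (1 - (n:ℝ)⁻¹ * ∑ i, X i ω)
              * Real.log (4 / δ) / n) + 4 * Real.log (4 / δ) / n)
            (Real.sqrt (Real.log (2 / δ) / (2 * n)))} := by
  obtain ⟨hδ0, hδ1⟩ := hδ
  have : Nonempty (Fin n) := ⟨⟨0, by omega⟩⟩
  have hn0 : (0:ℝ) < n := Nat.cast_pos.2 (by omega)
  have hL4 : 0 < log (4 / δ) / n := div_pos (log_pos (by rw [lt_div_iff₀ hδ0]; linarith)) hn0
  have hL2 : 0 < log (2 / δ) := log_pos (by rw [lt_div_iff₀ hδ0]; linarith)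
  set sB := √(2 * (p * (1 - p)) * (log (4 / δ) / n)) + 2 * (log (4 / δ) / n) / 3
  set sH := √(log (2 / δ) / (2 * n))
  set B := {ω | sB ≤ |p - (n:ℝ)⁻¹ * ∑ i, X i ω|} ∪ {ω | sH ≤ |p - (n:ℝ)⁻¹ * ∑ i, X i ω|}
  have hbern : Pr.real {ω | sB ≤ |p - (n:ℝ)⁻¹ * ∑ i, X i ω|} ≤ δ / 2 := by
    have h := measureReal_abs_sub_mean_ge_le_bernstein hXm hXindep hXdist hp hL4
    rw [Fintype.card_fin, mul_div_cancel₀ _ hn0.ne', exp_neg, exp_log (by positivity)] at h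
    linarith [inv_div 4 δ]
  have hhoeff : Pr.real {ω | sH ≤ |p - (n:ℝ)⁻¹ * ∑ i, X i ω|} ≤ δ := by
    have h := measureReal_abs_sub_mean_ge_le_hoeffding hXm hXindep hXdist hp
      (sqrt_nonneg (log (2 / δ) / (2 * n)))
    rw [Fintype.card_fin, sq_sqrt (by positivity), mul_div_cancel₀ _ (by positivity), exp_neg,
      exp_log (by positivity)] at h
    linarith [inv_div 2 δ]
  refine ofReal_one_sub_le_of_compl_ae_le (s := B) (by measurability)
    ((measureReal_union_le _ _).trans (by linarith)) ?_
  filter_upwards [ae_all_iff.2 fun i => ae_mem_Icc_of_map_eq_bernoulliLaw (hXm i) (hXdist i)]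
    with ω hω (hωB : ω ∉ B)
  simp only [B, Set.mem_union, Set.mem_ofPred_eq, not_or, not_le] at hωB
  have hq := inv_mul_sum_mem_Icc hω
  rw [Fintype.card_fin] at hq
  simp only [mul_div_assoc]
  exact le_min (abs_sub_le_of_abs_sub_le_bernstein hp hq hL4.le hωB.1.le) hωB.2.le
end

section
/- Let n ≥ 1 be an integer, δ ∈ (0,1), and let p, p̃, p̂ ∈ [0,1] satisfy |p − p̂| ≤ min{ √(2·p̂·(1−p̂)·log(4/δ)/n) + 4·log(4/δ)/n , √(log(2/δ)/(2n)) } and |p̃ − p̂| ≤ min{ √(2·p̂·(1−p̂)·log(4/δ)/n) + 4·log(4/δ)/n , √(log(2/δ)/(2n)) }. Then |p − p̃| ≤ √(8·p·(1−p)·log(4/δ)/n) + 4·(log(4/δ)/n)^{3/4} + 8·log(4/δ)/n. -/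
/-!
Both `p` and `p̃` lie within the empirical Bernstein radius `√(2 p̂(1-p̂) L) + 4L` of `p̂`,
where `L = log(4/δ)/n`, so it suffices to replace the empirical variance `p̂(1-p̂)` by the true
one `p(1-p)`. The map `x ↦ x(1-x)` is `1`-Lipschitz on `[0,1]` and the Hoeffding bound gives
`|p - p̂| ≤ √(L/2)`, so `p̂(1-p̂) ≤ p(1-p) + √(L/2)`; the extra `√(L/2)` inside the square root
costs at most `2 L^{3/4}`.
-/

open Real Set

lemma abs_mul_one_sub_sub_mul_one_sub_le {p q : ℝ} (hp : p ∈ Icc (0 : ℝ) 1)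
    (hq : q ∈ Icc (0 : ℝ) 1) : |q * (1 - q) - p * (1 - p)| ≤ |q - p| := by
  have hfactor : q * (1 - q) - p * (1 - p) = (q - p) * (1 - p - q) := by ring
  rw [hfactor, abs_mul]
  refine mul_le_of_le_one_right (abs_nonneg _) (abs_le.2 ⟨?_, ?_⟩) <;>
    linarith [hp.1, hp.2, hq.1, hq.2]

lemma rpow_three_div_four_sq {L : ℝ} (hL : 0 ≤ L) : (L ^ ((3 : ℝ) / 4)) ^ 2 = L * √L := by
  rw [← rpow_mul_natCast hL, sqrt_eq_rpow, ← rpow_one_add' hL (by norm_num)]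
  norm_num

lemma sqrt_two_mul_variance_le {L p q : ℝ} (hL : 0 ≤ L) (hp : p ∈ Icc (0 : ℝ) 1)
    (hq : q ∈ Icc (0 : ℝ) 1) (hpq : |p - q| ≤ √(L / 2)) :
    √(2 * q * (1 - q) * L) ≤ √(2 * p * (1 - p) * L) + 2 * L ^ ((3 : ℝ) / 4) := by
  have hvar : q * (1 - q) ≤ p * (1 - p) + √(L / 2) := by
    have := (le_abs_self _).trans <| (abs_mul_one_sub_sub_mul_one_sub_le hp hq).trans <|
      (abs_sub_comm q p).le.trans hpq
    linarith
  have hsqrt_half : √(L / 2) ≤ √L := sqrt_le_sqrt (by linarith)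
  have hpvar : 0 ≤ 2 * p * (1 - p) * L :=
    mul_nonneg (mul_nonneg (mul_nonneg zero_le_two hp.1) (sub_nonneg.2 hp.2)) hL
  have hrpow : 0 ≤ L ^ ((3 : ℝ) / 4) := rpow_nonneg hL _
  rw [sqrt_le_left (by positivity)]
  calc 2 * q * (1 - q) * L ≤ 2 * (p * (1 - p) + √(L / 2)) * L := by
        rw [mul_assoc 2 q]; gcongr
    _ ≤ 2 * p * (1 - p) * L + 4 * (L * √L) := by nlinarith [sqrt_nonneg L]
    _ = √(2 * p * (1 - p) * L) ^ 2 + (2 * L ^ ((3 : ℝ) / 4)) ^ 2 := by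
        rw [sq_sqrt hpvar, mul_pow, rpow_three_div_four_sq hL]; ring
    _ ≤ (√(2 * p * (1 - p) * L) + 2 * L ^ ((3 : ℝ) / 4)) ^ 2 := by
        nlinarith [sqrt_nonneg (2 * p * (1 - p) * L)]

theorem abs_sub_le_of_empirical_bernstein {L p q r : ℝ} (hL : 0 ≤ L) (hp : p ∈ Icc (0 : ℝ) 1)
    (hq : q ∈ Icc (0 : ℝ) 1) (hpq : |p - q| ≤ √(2 * q * (1 - q) * L) + 4 * L)
    (hpq_hoeffding : |p - q| ≤ √(L / 2)) (hrq : |r - q| ≤ √(2 * q * (1 - q) * L) + 4 * L) :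
    |p - r| ≤ √(8 * p * (1 - p) * L) + 4 * L ^ ((3 : ℝ) / 4) + 8 * L := by
  have hwidth := sqrt_two_mul_variance_le hL hp hq hpq_hoeffding
  have hsqrt_eight : √(8 * p * (1 - p) * L) = 2 * √(2 * p * (1 - p) * L) := by
    rw [show 8 * p * (1 - p) * L = 2 ^ 2 * (2 * p * (1 - p) * L) by ring,
      sqrt_mul (by norm_num), sqrt_sq (by norm_num)]
  rw [hsqrt_eight]
  calc |p - r| ≤ |p - q| + |r - q| := (abs_sub_le p q r).trans_eq (by rw [abs_sub_comm q r])
    _ ≤ _ := by linarith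

theorem stmt_2_general (n : ℕ) (δ p ptilde phat : ℝ)
    (hδ : δ ∈ Set.Ioo (0:ℝ) 1)
    (hp : p ∈ Set.Icc (0:ℝ) 1)
    (hph : phat ∈ Set.Icc (0:ℝ) 1)
    (h1 : |p - phat| ≤
      min (Real.sqrt (2 * phat * (1 - phat) * Real.log (4 / δ) / n) + 4 * Real.log (4 / δ) / n)
          (Real.sqrt (Real.log (2 / δ) / (2 * n))))
    (h2 : |ptilde - phat| ≤
      min (Real.sqrt (2 * phat * (1 - phat) * Real.log (4 / δ) / n) + 4 * Real.log (4 / δ) / n)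
          (Real.sqrt (Real.log (2 / δ) / (2 * n)))) :
    |p - ptilde| ≤ Real.sqrt (8 * p * (1 - p) * Real.log (4 / δ) / n)
      + 4 * (Real.log (4 / δ) / n) ^ ((3:ℝ) / 4) + 8 * Real.log (4 / δ) / n := by
  obtain ⟨hδ0, hδ1⟩ := hδ
  have hL : 0 ≤ Real.log (4 / δ) / n :=
    div_nonneg (Real.log_nonneg ((one_le_div hδ0).2 (by linarith))) n.cast_nonneg
  have hhoeffding : √(Real.log (2 / δ) / (2 * n)) ≤ √(Real.log (4 / δ) / n / 2) := by
    rw [div_div, mul_comm (n : ℝ) 2]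
    gcongr
    norm_num
  simp only [mul_div_assoc] at h1 h2 ⊢
  exact abs_sub_le_of_empirical_bernstein hL hp hph (h1.trans (min_le_left _ _))
    ((h1.trans (min_le_right _ _)).trans hhoeffding) (h2.trans (min_le_left _ _))

theorem stmt_2 (n : ℕ) (hn : 1 ≤ n) (δ p ptilde phat : ℝ)
    (hδ : δ ∈ Set.Ioo (0:ℝ) 1)
    (hp : p ∈ Set.Icc (0:ℝ) 1) (hpt : ptilde ∈ Set.Icc (0:ℝ) 1)
    (hph : phat ∈ Set.Icc (0:ℝ) 1)
    (h1 : |p - phat| ≤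
      min (Real.sqrt (2 * phat * (1 - phat) * Real.log (4 / δ) / n) + 4 * Real.log (4 / δ) / n)
          (Real.sqrt (Real.log (2 / δ) / (2 * n))))
    (h2 : |ptilde - phat| ≤
      min (Real.sqrt (2 * phat * (1 - phat) * Real.log (4 / δ) / n) + 4 * Real.log (4 / δ) / n)
          (Real.sqrt (Real.log (2 / δ) / (2 * n)))) :
    |p - ptilde| ≤ Real.sqrt (8 * p * (1 - p) * Real.log (4 / δ) / n)
      + 4 * (Real.log (4 / δ) / n) ^ ((3:ℝ) / 4) + 8 * Real.log (4 / δ) / n :=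
  stmt_2_general n δ p ptilde phat hδ hp hph h1 h2
end

section
/- Let γ ∈ [0,1), r : S×A → [0,1], n ≥ 1 an integer, δ ∈ (0,1), and let P, P̃ be transition kernels such that for all (s,a), ∑_{s'} |P(s'|s,a) − P̃(s'|s,a)| ≤ 2·√(log(2/δ)/(2n)). Then for every stationary policy π, max_{(s,a)∈S×A} |Q_r^{π,P}(s,a) − Q_r^{π,P̃}(s,a)| ≤ (2γ/(1−γ)²)·√(log(2/δ)/(2n)). -/
open Matrix MeasureTheory ProbabilityTheory

/-- A transition kernel on finite state and action spaces. -/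
def IsKernel {S A : Type*} [Fintype S] (P : S × A → S → ℝ) : Prop :=
  (∀ sa s', 0 ≤ P sa s') ∧ ∀ sa, ∑ s', P sa s' = 1

/-- A stationary (randomized) policy. -/
def IsPolicy {S A : Type*} [Fintype A] (π : S → A → ℝ) : Prop :=
  (∀ s a, 0 ≤ π s a) ∧ ∀ s, ∑ a, π s a = 1

/-- The transition matrix on state-action pairs induced by a policy. -/
def kernelMat {S A : Type*} (P : S × A → S → ℝ) (π : S → A → ℝ) :
    Matrix (S × A) (S × A) ℝ :=
  fun sa sa' => P sa sa'.1 * π sa'.1 sa'.2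

/-- The state-action value function `Q_b^{π,P} = ∑_{t} γ^t (P^π)^t b`. -/
noncomputable def Qval {S A : Type*} [Fintype S] [Fintype A] [DecidableEq S] [DecidableEq A]
    (γ : ℝ) (P : S × A → S → ℝ) (π : S → A → ℝ) (b : S × A → ℝ) : S × A → ℝ :=
  ∑' t : ℕ, γ ^ t • (kernelMat P π ^ t).mulVec b

/-- The value function `V_b^{π,P}(s) = ∑_a π(a|s) Q_b^{π,P}(s,a)`. -/
noncomputable def Vval {S A : Type*} [Fintype S] [Fintype A] [DecidableEq S] [DecidableEq A]
    (γ : ℝ) (P : S × A → S → ℝ) (π : S → A → ℝ) (b : S × A → ℝ) (s : S) : ℝ :=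
  ∑ a, π s a * Qval γ P π b (s, a)

/-- The value `V_b^{π,P}(μ) = ∑_s μ(s) V_b^{π,P}(s)`. -/
noncomputable def VvalMu {S A : Type*} [Fintype S] [Fintype A] [DecidableEq S] [DecidableEq A]
    (γ : ℝ) (P : S × A → S → ℝ) (π : S → A → ℝ) (b : S × A → ℝ) (μ : S → ℝ) : ℝ :=
  ∑ s, μ s * Vval γ P π b s

/-- The local variance `Var_P(v)(s,a)`. -/
def localVar {S A : Type*} [Fintype S] (P : S × A → S → ℝ) (v : S → ℝ) (sa : S × A) : ℝ :=
  ∑ s', P sa s' * (v s') ^ 2 - (∑ s', P sa s' * v s') ^ 2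

/-- The confidence radius `d_δ(s,a,s')` computed from `P̂` and `n`. -/
noncomputable def dDelta {S A : Type*} (Phat : S × A → S → ℝ) (n : ℕ) (δ : ℝ)
    (s : S) (a : A) (s' : S) : ℝ :=
  min (Real.sqrt (2 * Phat (s, a) s' * (1 - Phat (s, a) s') * Real.log (4 / δ) / n)
        + 4 * Real.log (4 / δ) / n)
      (Real.sqrt (Real.log (2 / δ) / (2 * n)))


/-! Both value functions solve a Bellman equation `Q = r + γ M Q`, so their difference `D`
satisfies `D = γ M D + γ (M - N) Q_N`. In the sup norm `M` is a contraction and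
`‖Q_N‖ ≤ ‖r‖ / (1 - γ)`, whence `‖D‖ ≤ γ ‖M - N‖ ‖r‖ / (1 - γ)²`. For the ℓ∞ operator norm,
`‖M - N‖` is the largest ℓ¹ distance between corresponding rows of the two kernels. -/

-- Matrices carry the ℓ∞ operator norm (max row ℓ¹ sum), dual to the sup norm on vectors.
attribute [local instance] Matrix.linftyOpNormedAddCommGroup

namespace Matrix

variable {ι : Type*} [Fintype ι]

theorem linfty_opNorm_le_of_forall_sum_le {m n α : Type*} [Fintype m] [Fintype n]
    [NormedAddCommGroup α] {A : Matrix m n α} {c : ℝ} (hc : 0 ≤ c)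
    (h : ∀ i, ∑ j, ‖A i j‖ ≤ c) : ‖A‖ ≤ c := by
  rw [linfty_opNorm_def, ← Real.coe_toNNReal c hc, NNReal.coe_le_coe]
  refine Finset.sup_le fun i _ => ?_
  rw [← NNReal.coe_le_coe, NNReal.coe_sum, Real.coe_toNNReal c hc]
  exact h i

variable {M N : Matrix ι ι ℝ} {γ : ℝ}

theorem norm_sub_le_of_eq_add {x y b : ι → ℝ} (hγ₀ : 0 ≤ γ) (hγ₁ : γ < 1) (hM : ‖M‖ ≤ 1)
    (hx : x = b + γ • M *ᵥ x) (hy : y = b + γ • N *ᵥ y) :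
    ‖x - y‖ ≤ γ * ‖M - N‖ * ‖y‖ / (1 - γ) := by
  have hdiff : x - y = γ • M *ᵥ (x - y) + γ • (M - N) *ᵥ y := by
    conv_lhs => rw [hx, hy]
    rw [mulVec_sub, sub_mulVec]
    module
  have hle : ‖x - y‖ ≤ γ * ‖x - y‖ + γ * (‖M - N‖ * ‖y‖) := by
    calc ‖x - y‖ ≤ ‖γ • M *ᵥ (x - y)‖ + ‖γ • (M - N) *ᵥ y‖ :=
          (congrArg norm hdiff).trans_le (norm_add_le _ _)
      _ ≤ γ * ‖x - y‖ + γ * (‖M - N‖ * ‖y‖) := by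
        rw [norm_smul, norm_smul, Real.norm_of_nonneg hγ₀]
        gcongr
        · exact (linfty_opNorm_mulVec _ _).trans (mul_le_of_le_one_left (norm_nonneg _) hM)
        · exact linfty_opNorm_mulVec _ _
  rw [le_div_iff₀ (sub_pos.2 hγ₁)]
  linarith

variable [DecidableEq ι]

theorem norm_pow_mulVec_le (hM : ‖M‖ ≤ 1) (t : ℕ) (v : ι → ℝ) : ‖(M ^ t) *ᵥ v‖ ≤ ‖v‖ := by
  induction t with
  | zero => simp
  | succ t ih =>
    rw [pow_succ', ← mulVec_mulVec]
    calc ‖M *ᵥ ((M ^ t) *ᵥ v)‖ ≤ ‖M‖ * ‖(M ^ t) *ᵥ v‖ := linfty_opNorm_mulVec _ _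
      _ ≤ 1 * ‖v‖ := by gcongr
      _ = ‖v‖ := one_mul _

/-- `Qval γ P π b` is `discountedValue γ (kernelMat P π) b` by definition. -/
noncomputable def discountedValue (γ : ℝ) (M : Matrix ι ι ℝ) (b : ι → ℝ) : ι → ℝ :=
  ∑' t : ℕ, γ ^ t • (M ^ t) *ᵥ b

theorem norm_discountedValue_term_le (hγ₀ : 0 ≤ γ) (hM : ‖M‖ ≤ 1) (b : ι → ℝ) (t : ℕ) :
    ‖γ ^ t • (M ^ t) *ᵥ b‖ ≤ γ ^ t * ‖b‖ := by
  rw [norm_smul, Real.norm_of_nonneg (pow_nonneg hγ₀ t)]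
  exact mul_le_mul_of_nonneg_left (norm_pow_mulVec_le hM t b) (pow_nonneg hγ₀ t)

theorem summable_discountedValue (hγ₀ : 0 ≤ γ) (hγ₁ : γ < 1) (hM : ‖M‖ ≤ 1) (b : ι → ℝ) :
    Summable fun t : ℕ => γ ^ t • (M ^ t) *ᵥ b :=
  .of_norm_bounded ((summable_geometric_of_lt_one hγ₀ hγ₁).mul_right _)
    (norm_discountedValue_term_le hγ₀ hM b)

theorem norm_discountedValue_le (hγ₀ : 0 ≤ γ) (hγ₁ : γ < 1) (hM : ‖M‖ ≤ 1) (b : ι → ℝ) :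
    ‖discountedValue γ M b‖ ≤ ‖b‖ / (1 - γ) := by
  rw [div_eq_inv_mul]
  exact tsum_of_norm_bounded ((hasSum_geometric_of_lt_one hγ₀ hγ₁).mul_right _)
    (norm_discountedValue_term_le hγ₀ hM b)

theorem discountedValue_eq_add (hγ₀ : 0 ≤ γ) (hγ₁ : γ < 1) (hM : ‖M‖ ≤ 1) (b : ι → ℝ) :
    discountedValue γ M b = b + γ • M *ᵥ discountedValue γ M b := by
  have hsum := summable_discountedValue hγ₀ hγ₁ hM b
  have hcont : Continuous (mulVecLin M) := LinearMap.continuous_of_finiteDimensional _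
  rw [discountedValue, ← mulVecLin_apply, hsum.map_tsum _ hcont, hsum.tsum_eq_zero_add,
    ← tsum_const_smul'' γ]
  congr 1
  · simp
  · refine tsum_congr fun t => ?_
    rw [mulVecLin_apply, mulVec_smul, smul_smul, ← pow_succ', mulVec_mulVec, ← pow_succ']

theorem norm_discountedValue_sub_le (hγ₀ : 0 ≤ γ) (hγ₁ : γ < 1) (hM : ‖M‖ ≤ 1) (hN : ‖N‖ ≤ 1)
    (b : ι → ℝ) :
    ‖discountedValue γ M b - discountedValue γ N b‖ ≤ γ * ‖M - N‖ * ‖b‖ / (1 - γ) ^ 2 := by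
  have h1γ : 0 < 1 - γ := sub_pos.2 hγ₁
  calc _ ≤ γ * ‖M - N‖ * ‖discountedValue γ N b‖ / (1 - γ) :=
        norm_sub_le_of_eq_add hγ₀ hγ₁ hM (discountedValue_eq_add hγ₀ hγ₁ hM b)
          (discountedValue_eq_add hγ₀ hγ₁ hN b)
    _ ≤ γ * ‖M - N‖ * (‖b‖ / (1 - γ)) / (1 - γ) := by
        gcongr
        exact norm_discountedValue_le hγ₀ hγ₁ hN b
    _ = γ * ‖M - N‖ * ‖b‖ / (1 - γ) ^ 2 := by field_simp

end Matrix

open Matrix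

theorem IsKernel.sum_abs {S A : Type*} [Fintype S] {P : S × A → S → ℝ} (hP : IsKernel P)
    (sa : S × A) : ∑ s', |P sa s'| = 1 := by
  simp_rw [abs_of_nonneg (hP.1 sa _)]
  exact hP.2 sa

theorem kernelMat_sub {S A : Type*} (P P' : S × A → S → ℝ) (π : S → A → ℝ) :
    kernelMat P π - kernelMat P' π = kernelMat (P - P') π := by
  ext sa sa'
  simp [kernelMat, sub_mul]

section kernelMat

variable {S A : Type*} [Fintype S] [Fintype A]

theorem sum_abs_kernelMat {π : S → A → ℝ} (hπ : IsPolicy π) (K : S × A → S → ℝ) (sa : S × A) :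
    ∑ sa', |kernelMat K π sa sa'| = ∑ s', |K sa s'| := by
  rw [Fintype.sum_prod_type]
  refine Finset.sum_congr rfl fun s' _ => ?_
  simp_rw [kernelMat, abs_mul, abs_of_nonneg (hπ.1 s' _), ← Finset.mul_sum, hπ.2 s', mul_one]

theorem norm_kernelMat_le {π : S → A → ℝ} (hπ : IsPolicy π) {K : S × A → S → ℝ} {c : ℝ}
    (hc : 0 ≤ c) (h : ∀ sa, ∑ s', |K sa s'| ≤ c) : ‖kernelMat K π‖ ≤ c :=
  linfty_opNorm_le_of_forall_sum_le (A := kernelMat K π) hc fun sa => by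
    simpa only [Real.norm_eq_abs, sum_abs_kernelMat hπ] using h sa

end kernelMat

theorem stmt_4_general {S A : Type*} [Fintype S] [Fintype A] [DecidableEq S] [DecidableEq A]
    (γ : ℝ) (hγ : γ ∈ Set.Ico (0:ℝ) 1)
    (r : S × A → ℝ) (hr : ∀ sa, r sa ∈ Set.Icc (0:ℝ) 1)
    (n : ℕ) (δ : ℝ)
    (P Ptilde : S × A → S → ℝ) (hP : IsKernel P) (hPt : IsKernel Ptilde)
    (hclose : ∀ sa : S × A, ∑ s', |P sa s' - Ptilde sa s'| ≤
      2 * Real.sqrt (Real.log (2 / δ) / (2 * n)))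
    (π : S → A → ℝ) (hπ : IsPolicy π) :
    ∀ sa : S × A, |Qval γ P π r sa - Qval γ Ptilde π r sa| ≤
      (2 * γ / (1 - γ) ^ 2) * Real.sqrt (Real.log (2 / δ) / (2 * n)) := by
  intro sa
  set ε := Real.sqrt (Real.log (2 / δ) / (2 * n))
  have hM : ‖kernelMat P π‖ ≤ 1 := norm_kernelMat_le hπ zero_le_one fun sa => (hP.sum_abs sa).le
  have hN : ‖kernelMat Ptilde π‖ ≤ 1 :=
    norm_kernelMat_le hπ zero_le_one fun sa => (hPt.sum_abs sa).le
  have hMN : ‖kernelMat P π - kernelMat Ptilde π‖ ≤ 2 * ε := by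
    rw [kernelMat_sub]
    exact norm_kernelMat_le hπ (by positivity) hclose
  have hr_norm : ‖r‖ ≤ 1 := (pi_norm_le_iff_of_nonneg zero_le_one).2 fun sa =>
    abs_le.2 ⟨by linarith [(hr sa).1], (hr sa).2⟩
  calc |Qval γ P π r sa - Qval γ Ptilde π r sa|
      ≤ ‖discountedValue γ (kernelMat P π) r - discountedValue γ (kernelMat Ptilde π) r‖ :=
        norm_le_pi_norm (discountedValue γ (kernelMat P π) r - _) sa
    _ ≤ γ * ‖kernelMat P π - kernelMat Ptilde π‖ * ‖r‖ / (1 - γ) ^ 2 :=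
        norm_discountedValue_sub_le hγ.1 hγ.2 hM hN r
    _ ≤ γ * (2 * ε) * 1 / (1 - γ) ^ 2 := by have := hγ.1; gcongr
    _ = 2 * γ / (1 - γ) ^ 2 * ε := by ring

theorem stmt_4 {S A : Type*} [Fintype S] [Fintype A] [DecidableEq S] [DecidableEq A]
    [Nonempty S] [Nonempty A]
    (γ : ℝ) (hγ : γ ∈ Set.Ico (0:ℝ) 1)
    (r : S × A → ℝ) (hr : ∀ sa, r sa ∈ Set.Icc (0:ℝ) 1)
    (n : ℕ) (hn : 1 ≤ n) (δ : ℝ) (hδ : δ ∈ Set.Ioo (0:ℝ) 1)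
    (P Ptilde : S × A → S → ℝ) (hP : IsKernel P) (hPt : IsKernel Ptilde)
    (hclose : ∀ sa : S × A, ∑ s', |P sa s' - Ptilde sa s'| ≤
      2 * Real.sqrt (Real.log (2 / δ) / (2 * n)))
    (π : S → A → ℝ) (hπ : IsPolicy π) :
    ∀ sa : S × A, |Qval γ P π r sa - Qval γ Ptilde π r sa| ≤
      (2 * γ / (1 - γ) ^ 2) * Real.sqrt (Real.log (2 / δ) / (2 * n)) :=
  stmt_4_general γ hγ r hr n δ P Ptilde hP hPt hclose π hπ
end

section
/- Let γ ∈ [0,1), r : S×A → [0,1], n ≥ 1 an integer, δ ∈ (0,1), and let P, P̃ be transition kernels such that for all (s,a), ∑_{s'} |P(s'|s,a) − P̃(s'|s,a)| ≤ 2·√(log(2/δ)/(2n)). Then for every stationary policy π and every (s,a) ∈ S×A, Var_P(V_r^{π,P})(s,a) ≤ 2·Var_{P̃}(V_r^{π,P̃})(s,a) + (6/(1−γ)²)·√(log(2/δ)/(2n)) + (8γ²/(1−γ)⁴)·(log(2/δ)/(2n)). -/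
open Matrix MeasureTheory ProbabilityTheory

/-!
Rewards in `[0, 1]` keep both value functions in `[0, 1/(1-γ)]`. Subtracting the two Bellman
equations gives the simulation bound `‖Q_P − Q_P̃‖∞ ≤ γ ε / (2 (1-γ)²)`, where `ε` bounds the
`ℓ¹` distance of the kernels, so `V_P` and `V_P̃` are uniformly within `K = γ √x / (1-γ)²`,
`x = log(2/δ)/(2n)`. Then `Var_P(V_P) ≤ 2 Var_P(V_P̃) + 2 K²` and changing the kernel costs
`Var_P(V_P̃) ≤ Var_P̃(V_P̃) + (3/2) ε / (1-γ)²`.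
-/

open Finset

section ProbabilityVector

variable {ι : Type*} [Fintype ι] {p q f : ι → ℝ} {c M : ℝ}

lemma sum_mul_le_of_le (hp₀ : ∀ i, 0 ≤ p i) (hp₁ : ∑ i, p i = 1) (hf : ∀ i, f i ≤ c) :
    ∑ i, p i * f i ≤ c :=
  calc ∑ i, p i * f i ≤ ∑ i, p i * c :=
        sum_le_sum fun i _ => mul_le_mul_of_nonneg_left (hf i) (hp₀ i)
    _ = c := by rw [← sum_mul, hp₁, one_mul]

lemma le_sum_mul_of_le (hp₀ : ∀ i, 0 ≤ p i) (hp₁ : ∑ i, p i = 1) (hf : ∀ i, c ≤ f i) :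
    c ≤ ∑ i, p i * f i :=
  calc c = ∑ i, p i * c := by rw [← sum_mul, hp₁, one_mul]
    _ ≤ ∑ i, p i * f i := sum_le_sum fun i _ => mul_le_mul_of_nonneg_left (hf i) (hp₀ i)

lemma abs_sum_mul_le (hp₀ : ∀ i, 0 ≤ p i) (hp₁ : ∑ i, p i = 1) (hf : ∀ i, |f i| ≤ c) :
    |∑ i, p i * f i| ≤ c :=
  abs_le.2 ⟨le_sum_mul_of_le hp₀ hp₁ fun i => (abs_le.1 (hf i)).1,
    sum_mul_le_of_le hp₀ hp₁ fun i => (abs_le.1 (hf i)).2⟩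

/-- Since `p - q` has total mass zero, `f` may be recentred at any `c` first. -/
lemma abs_sum_mul_sub_sum_mul_le (hp₁ : ∑ i, p i = 1) (hq₁ : ∑ i, q i = 1)
    (hf : ∀ i, |f i - c| ≤ M) :
    |∑ i, p i * f i - ∑ i, q i * f i| ≤ (∑ i, |p i - q i|) * M := by
  have hrecentre : ∑ i, p i * f i - ∑ i, q i * f i = ∑ i, (p i - q i) * (f i - c) := by
    simp only [sub_mul, mul_sub, sum_sub_distrib, ← sum_mul, hp₁, hq₁, one_mul, sub_self,
      sub_zero]
  rw [hrecentre, sum_mul]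
  refine (abs_sum_le_sum_abs _ _).trans (sum_le_sum fun i _ => ?_)
  rw [abs_mul]
  exact mul_le_mul_of_nonneg_left (hf i) (abs_nonneg _)

lemma abs_sum_mul_sub_sum_mul_le_of_mem_Icc (hp₁ : ∑ i, p i = 1) (hq₁ : ∑ i, q i = 1)
    (hf : ∀ i, f i ∈ Set.Icc 0 c) :
    |∑ i, p i * f i - ∑ i, q i * f i| ≤ (∑ i, |p i - q i|) * (c / 2) :=
  abs_sum_mul_sub_sum_mul_le (c := c / 2) hp₁ hq₁ fun i =>
    abs_le.2 ⟨by linarith [(hf i).1], by linarith [(hf i).2]⟩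

end ProbabilityVector

section Stochastic

variable {n : Type*} [Fintype n] [DecidableEq n] {M : Matrix n n ℝ} {γ : ℝ}

lemma norm_mulVec_le_of_mem_rowStochastic (hM : M ∈ Matrix.rowStochastic ℝ n) (x : n → ℝ) :
    ‖M *ᵥ x‖ ≤ ‖x‖ :=
  (pi_norm_le_iff_of_nonneg (norm_nonneg x)).2 fun i =>
    abs_sum_mul_le (fun _ => Matrix.nonneg_of_mem_rowStochastic hM)
      (Matrix.sum_row_of_mem_rowStochastic hM i) fun j => norm_le_pi_norm x j

lemma norm_smul_pow_mulVec_le (hγ₀ : 0 ≤ γ) (hM : M ∈ Matrix.rowStochastic ℝ n) (x : n → ℝ)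
    (t : ℕ) : ‖γ ^ t • (M ^ t) *ᵥ x‖ ≤ γ ^ t * ‖x‖ := by
  rw [norm_smul, Real.norm_of_nonneg (pow_nonneg hγ₀ t)]
  exact mul_le_mul_of_nonneg_left
    (norm_mulVec_le_of_mem_rowStochastic (pow_mem hM t) x) (pow_nonneg hγ₀ t)

lemma summable_smul_pow_mulVec (hγ₀ : 0 ≤ γ) (hγ₁ : γ < 1) (hM : M ∈ Matrix.rowStochastic ℝ n)
    (x : n → ℝ) : Summable fun t : ℕ => γ ^ t • (M ^ t) *ᵥ x :=
  .of_norm_bounded ((summable_geometric_of_lt_one hγ₀ hγ₁).mul_right ‖x‖)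
    (norm_smul_pow_mulVec_le hγ₀ hM x)

lemma norm_tsum_smul_pow_mulVec_le (hγ₀ : 0 ≤ γ) (hγ₁ : γ < 1)
    (hM : M ∈ Matrix.rowStochastic ℝ n) (x : n → ℝ) :
    ‖∑' t : ℕ, γ ^ t • (M ^ t) *ᵥ x‖ ≤ (1 - γ)⁻¹ * ‖x‖ :=
  tsum_of_norm_bounded ((hasSum_geometric_of_lt_one hγ₀ hγ₁).mul_right ‖x‖)
    (norm_smul_pow_mulVec_le hγ₀ hM x)

lemma tsum_smul_pow_mulVec_nonneg (hγ₀ : 0 ≤ γ) (hγ₁ : γ < 1)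
    (hM : M ∈ Matrix.rowStochastic ℝ n) {x : n → ℝ} (hx : 0 ≤ x) :
    0 ≤ ∑' t : ℕ, γ ^ t • (M ^ t) *ᵥ x := by
  intro i
  rw [tsum_apply (summable_smul_pow_mulVec hγ₀ hγ₁ hM x)]
  exact tsum_nonneg fun t => mul_nonneg (pow_nonneg hγ₀ t)
    (Matrix.nonneg_mulVec_of_mem_rowStochastic (pow_mem hM t) hx i)

lemma tsum_smul_pow_mulVec_eq (hγ₀ : 0 ≤ γ) (hγ₁ : γ < 1)
    (hM : M ∈ Matrix.rowStochastic ℝ n) (x : n → ℝ) :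
    ∑' t : ℕ, γ ^ t • (M ^ t) *ᵥ x = x + γ • M *ᵥ ∑' t : ℕ, γ ^ t • (M ^ t) *ᵥ x := by
  have hsum := summable_smul_pow_mulVec hγ₀ hγ₁ hM x
  let L := LinearMap.toContinuousLinearMap (Matrix.toLin' (γ • M))
  have hL : ∀ v, L v = γ • M *ᵥ v := fun v => by simp [L]
  conv_lhs => rw [hsum.tsum_eq_zero_add]
  rw [← hL, L.map_tsum hsum]
  simp only [pow_zero, one_smul, Matrix.one_mulVec, hL, Matrix.mulVec_smul, smul_smul,
    Matrix.mulVec_mulVec, pow_succ', mul_comm γ]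

end Stochastic

section MDP

variable {S A : Type*} [Fintype S] [Fintype A] [DecidableEq S] [DecidableEq A]
  {γ : ℝ} {P P' : S × A → S → ℝ} {π : S → A → ℝ} {r : S × A → ℝ}

lemma kernelMat_mem_rowStochastic (hP : IsKernel P) (hπ : IsPolicy π) :
    kernelMat P π ∈ Matrix.rowStochastic ℝ (S × A) := by
  refine Matrix.mem_rowStochastic_iff_sum.2
    ⟨fun sa sa' => mul_nonneg (hP.1 sa sa'.1) (hπ.1 sa'.1 sa'.2), fun sa => ?_⟩
  simp only [kernelMat, Fintype.sum_prod_type, ← mul_sum, hπ.2, mul_one, hP.2 sa]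

omit [DecidableEq S] [DecidableEq A] in
lemma kernelMat_mulVec_apply (Q : S × A → ℝ) (sa : S × A) :
    (kernelMat P π *ᵥ Q) sa = ∑ s', P sa s' * ∑ a', π s' a' * Q (s', a') := by
  simp only [Matrix.mulVec, dotProduct, kernelMat, Fintype.sum_prod_type, mul_sum, mul_assoc]

lemma Qval_nonneg (hγ₀ : 0 ≤ γ) (hγ₁ : γ < 1) (hP : IsKernel P) (hπ : IsPolicy π)
    (hr : 0 ≤ r) : 0 ≤ Qval γ P π r :=
  tsum_smul_pow_mulVec_nonneg hγ₀ hγ₁ (kernelMat_mem_rowStochastic hP hπ) hr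

lemma norm_Qval_le (hγ₀ : 0 ≤ γ) (hγ₁ : γ < 1) (hP : IsKernel P) (hπ : IsPolicy π) :
    ‖Qval γ P π r‖ ≤ (1 - γ)⁻¹ * ‖r‖ :=
  norm_tsum_smul_pow_mulVec_le hγ₀ hγ₁ (kernelMat_mem_rowStochastic hP hπ) r

lemma Qval_eq_add_mul_sum_Vval (hγ₀ : 0 ≤ γ) (hγ₁ : γ < 1) (hP : IsKernel P)
    (hπ : IsPolicy π) (sa : S × A) :
    Qval γ P π r sa = r sa + γ * ∑ s', P sa s' * Vval γ P π r s' := by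
  have h := congrFun (tsum_smul_pow_mulVec_eq hγ₀ hγ₁ (kernelMat_mem_rowStochastic hP hπ) r) sa
  rw [← Qval] at h
  rw [h, Pi.add_apply, Pi.smul_apply, smul_eq_mul, kernelMat_mulVec_apply]
  rfl

lemma Vval_sub_Vval (s : S) :
    Vval γ P π r s - Vval γ P' π r s
      = ∑ a, π s a * (Qval γ P π r (s, a) - Qval γ P' π r (s, a)) := by
  simp only [Vval, mul_sub, sum_sub_distrib]

lemma abs_Vval_sub_Vval_le (hπ : IsPolicy π) {K : ℝ} {s : S}
    (hK : ∀ a, |Qval γ P π r (s, a) - Qval γ P' π r (s, a)| ≤ K) :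
    |Vval γ P π r s - Vval γ P' π r s| ≤ K := by
  rw [Vval_sub_Vval]
  exact abs_sum_mul_le (hπ.1 s) (hπ.2 s) hK

lemma Vval_mem_Icc (hγ₀ : 0 ≤ γ) (hγ₁ : γ < 1) (hP : IsKernel P) (hπ : IsPolicy π)
    (hr : ∀ sa, r sa ∈ Set.Icc (0 : ℝ) 1) (s : S) :
    Vval γ P π r s ∈ Set.Icc 0 (1 - γ)⁻¹ := by
  have hr_norm : ‖r‖ ≤ 1 :=
    (pi_norm_le_iff_of_nonneg zero_le_one).2 fun sa => by
      rw [Real.norm_of_nonneg (hr sa).1]; exact (hr sa).2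
  have hQ_le : ∀ sa, Qval γ P π r sa ≤ (1 - γ)⁻¹ := fun sa =>
    calc Qval γ P π r sa ≤ ‖Qval γ P π r‖ := (Real.le_norm_self _).trans (norm_le_pi_norm _ sa)
      _ ≤ (1 - γ)⁻¹ * ‖r‖ := norm_Qval_le hγ₀ hγ₁ hP hπ
      _ ≤ (1 - γ)⁻¹ := mul_le_of_le_one_right (inv_nonneg.2 (by linarith)) hr_norm
  exact ⟨le_sum_mul_of_le (hπ.1 s) (hπ.2 s) fun a =>
      Qval_nonneg hγ₀ hγ₁ hP hπ (fun sa => (hr sa).1) (s, a),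
    sum_mul_le_of_le (hπ.1 s) (hπ.2 s) fun a => hQ_le (s, a)⟩


/-- Bellman's equation writes `Q − Q'` as `γ P (V − V') + γ (P − P') V'`, so the sup norm of
`Q − Q'` is at most `γ` times itself plus `γ ‖P − P'‖₁ ‖V' − c‖∞`, with `V'` centred at
`c = 1/(2(1−γ))`. -/
lemma abs_Qval_sub_Qval_le (hγ₀ : 0 ≤ γ) (hγ₁ : γ < 1) (hP : IsKernel P) (hP' : IsKernel P')
    (hπ : IsPolicy π) (hr : ∀ sa, r sa ∈ Set.Icc (0 : ℝ) 1) {ε : ℝ}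
    (hPP' : ∀ sa, ∑ s', |P sa s' - P' sa s'| ≤ ε) (sa : S × A) :
    |Qval γ P π r sa - Qval γ P' π r sa| ≤ γ * ε / (2 * (1 - γ) ^ 2) := by
  set B := (1 - γ)⁻¹ with hB
  set D := Qval γ P π r - Qval γ P' π r with hD
  have hε : 0 ≤ ε := (sum_nonneg fun _ _ => abs_nonneg _).trans (hPP' sa)
  have hstep : ∀ sa, |D sa| ≤ γ * (‖D‖ + ε * (B / 2)) := fun sa => by
    have hsplit : D sa = γ * (∑ s', P sa s' * (Vval γ P π r s' - Vval γ P' π r s')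
        + (∑ s', P sa s' * Vval γ P' π r s' - ∑ s', P' sa s' * Vval γ P' π r s')) := by
      simp only [hD, Pi.sub_apply, Qval_eq_add_mul_sum_Vval hγ₀ hγ₁ hP hπ,
        Qval_eq_add_mul_sum_Vval hγ₀ hγ₁ hP' hπ, mul_sub, sum_sub_distrib]
      ring
    rw [hsplit, abs_mul, abs_of_nonneg hγ₀]
    refine mul_le_mul_of_nonneg_left ((abs_add_le _ _).trans (add_le_add ?_ ?_)) hγ₀
    · exact abs_sum_mul_le (hP.1 sa) (hP.2 sa) fun s' =>
        abs_Vval_sub_Vval_le hπ fun a => norm_le_pi_norm D (s', a)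
    · exact (abs_sum_mul_sub_sum_mul_le_of_mem_Icc (hP.2 sa) (hP'.2 sa)
        (Vval_mem_Icc hγ₀ hγ₁ hP' hπ hr)).trans
        (mul_le_mul_of_nonneg_right (hPP' sa) (by positivity))
  have hnorm : ‖D‖ ≤ γ * (‖D‖ + ε * (B / 2)) :=
    (pi_norm_le_iff_of_nonneg (by positivity)).2 hstep
  have hγB : (1 - γ) * B = 1 := mul_inv_cancel₀ (by linarith)
  calc |D sa| ≤ ‖D‖ := norm_le_pi_norm D sa
    _ = ‖D‖ * (1 - γ) * B := by rw [mul_assoc, hγB, mul_one]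
    _ ≤ γ * ε * (B / 2) * B := mul_le_mul_of_nonneg_right (by linarith) (by positivity)
    _ = γ * ε / (2 * (1 - γ) ^ 2) := by rw [hB]; field_simp

end MDP

section LocalVariance

variable {S A : Type*} [Fintype S] {P Q : S × A → S → ℝ} {f g : S → ℝ}

lemma sum_mul_sub_sq_eq_localVar_add (hP : IsKernel P) (sa : S × A) (c : ℝ) :
    ∑ s', P sa s' * (f s' - c) ^ 2 = localVar P f sa + (∑ s', P sa s' * f s' - c) ^ 2 := by
  have hexpand : ∀ s', P sa s' * (f s' - c) ^ 2
      = P sa s' * f s' ^ 2 - 2 * c * (P sa s' * f s') + c ^ 2 * P sa s' := fun s' => by ring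
  simp only [hexpand, sum_add_distrib, sum_sub_distrib, ← mul_sum, hP.2 sa, localVar]
  ring

lemma localVar_le_two_mul_add (hP : IsKernel P) {K : ℝ} (hfg : ∀ s, |f s - g s| ≤ K)
    (sa : S × A) : localVar P f sa ≤ 2 * localVar P g sa + 2 * K ^ 2 := by
  set c := ∑ s', P sa s' * g s'
  have hpointwise : ∀ s', (f s' - c) ^ 2 ≤ 2 * (g s' - c) ^ 2 + 2 * K ^ 2 := fun s' => by
    have : (f s' - g s') ^ 2 ≤ K ^ 2 := by
      rw [← sq_abs]; exact pow_le_pow_left₀ (abs_nonneg _) (hfg s') 2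
    nlinarith [sq_nonneg (f s' - g s' - (g s' - c))]
  calc localVar P f sa ≤ ∑ s', P sa s' * (f s' - c) ^ 2 := by
        rw [sum_mul_sub_sq_eq_localVar_add hP]; exact le_add_of_nonneg_right (sq_nonneg _)
    _ ≤ ∑ s', P sa s' * (2 * (g s' - c) ^ 2 + 2 * K ^ 2) :=
        sum_le_sum fun s' _ => mul_le_mul_of_nonneg_left (hpointwise s') (hP.1 sa s')
    _ = 2 * ∑ s', P sa s' * (g s' - c) ^ 2 + 2 * K ^ 2 := by
        simp only [mul_add, sum_add_distrib, ← sum_mul, hP.2 sa, mul_left_comm _ (2 : ℝ),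
          ← mul_sum, one_mul]
    _ = 2 * localVar P g sa + 2 * K ^ 2 := by
        rw [sum_mul_sub_sq_eq_localVar_add hP, sub_self]; ring

/-- Write `Var_P g − Var_Q g = (E_P g² − E_Q g²) − (E_P g − E_Q g)(E_P g + E_Q g)`; each
difference of means costs `‖P − Q‖₁` times half the range of the integrand. -/
lemma localVar_le_localVar_add (hP : IsKernel P) (hQ : IsKernel Q) {B ε : ℝ}
    (hg : ∀ s, g s ∈ Set.Icc 0 B) {sa : S × A} (hPQ : ∑ s', |P sa s' - Q sa s'| ≤ ε) :
    localVar P g sa ≤ localVar Q g sa + 3 / 2 * ε * B ^ 2 := by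
  have hε : 0 ≤ ε := (sum_nonneg fun _ _ => abs_nonneg _).trans hPQ
  have hmean : ∀ {R : S × A → S → ℝ}, IsKernel R →
      0 ≤ ∑ s', R sa s' * g s' ∧ ∑ s', R sa s' * g s' ≤ B := fun hR =>
    ⟨le_sum_mul_of_le (hR.1 sa) (hR.2 sa) fun s => (hg s).1,
      sum_mul_le_of_le (hR.1 sa) (hR.2 sa) fun s => (hg s).2⟩
  obtain ⟨hPg₀, hPg₁⟩ := hmean hP
  obtain ⟨hQg₀, hQg₁⟩ := hmean hQ
  have hB : 0 ≤ B := hPg₀.trans hPg₁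
  have hg_sq : ∀ s, g s ^ 2 ∈ Set.Icc 0 (B ^ 2) := fun s =>
    ⟨sq_nonneg _, pow_le_pow_left₀ (hg s).1 (hg s).2 2⟩
  have hsecond : ∑ s', P sa s' * g s' ^ 2 - ∑ s', Q sa s' * g s' ^ 2 ≤ ε * (B ^ 2 / 2) :=
    (le_abs_self _).trans <| (abs_sum_mul_sub_sum_mul_le_of_mem_Icc (f := fun s => g s ^ 2)
      (hP.2 sa) (hQ.2 sa) hg_sq).trans (mul_le_mul_of_nonneg_right hPQ (by positivity))
  have hfirst : |∑ s', P sa s' * g s' - ∑ s', Q sa s' * g s'| ≤ ε * (B / 2) :=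
    (abs_sum_mul_sub_sum_mul_le_of_mem_Icc (hP.2 sa) (hQ.2 sa) hg).trans
      (mul_le_mul_of_nonneg_right hPQ (by positivity))
  have hsq_means : (∑ s', Q sa s' * g s') ^ 2 - (∑ s', P sa s' * g s') ^ 2 ≤ ε * B ^ 2 :=
    calc (∑ s', Q sa s' * g s') ^ 2 - (∑ s', P sa s' * g s') ^ 2
        = -(∑ s', P sa s' * g s' - ∑ s', Q sa s' * g s')
          * (∑ s', P sa s' * g s' + ∑ s', Q sa s' * g s') := by ring
      _ ≤ ε * (B / 2) * (2 * B) :=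
          mul_le_mul ((neg_le_abs _).trans hfirst) (by linarith) (by linarith) (by positivity)
      _ = ε * B ^ 2 := by ring
  unfold localVar
  linarith

end LocalVariance

theorem stmt_5_general {S A : Type*} [Fintype S] [Fintype A] [DecidableEq S] [DecidableEq A]
    (γ : ℝ) (hγ : γ ∈ Set.Ico (0:ℝ) 1)
    (r : S × A → ℝ) (hr : ∀ sa, r sa ∈ Set.Icc (0:ℝ) 1)
    (n : ℕ) (δ : ℝ) (hδ : δ ∈ Set.Ioo (0:ℝ) 1)
    (P Ptilde : S × A → S → ℝ) (hP : IsKernel P) (hPt : IsKernel Ptilde)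
    (hclose : ∀ sa : S × A, ∑ s', |P sa s' - Ptilde sa s'| ≤
      2 * Real.sqrt (Real.log (2 / δ) / (2 * n)))
    (π : S → A → ℝ) (hπ : IsPolicy π) :
    ∀ sa : S × A, localVar P (Vval γ P π r) sa ≤
      2 * localVar Ptilde (Vval γ Ptilde π r) sa
      + (6 / (1 - γ) ^ 2) * Real.sqrt (Real.log (2 / δ) / (2 * n))
      + (8 * γ ^ 2 / (1 - γ) ^ 4) * (Real.log (2 / δ) / (2 * n)) := by
  obtain ⟨hγ₀, hγ₁⟩ := hγ
  set x := Real.log (2 / δ) / (2 * n)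
  have hx : 0 ≤ x :=
    div_nonneg (Real.log_nonneg ((one_le_div hδ.1).2 (by linarith [hδ.2]))) (by positivity)
  have hQ := abs_Qval_sub_Qval_le hγ₀ hγ₁ hP hPt hπ hr hclose
  intro sa
  have hvar_V := localVar_le_two_mul_add (f := Vval γ P π r) (g := Vval γ Ptilde π r) hP
    (fun s => abs_Vval_sub_Vval_le hπ fun a => hQ (s, a)) sa
  have hvar_kernel := localVar_le_localVar_add hP hPt (Vval_mem_Icc hγ₀ hγ₁ hPt hπ hr) (hclose sa)
  calc localVar P (Vval γ P π r) sa
      ≤ 2 * (localVar Ptilde (Vval γ Ptilde π r) sa + 3 / 2 * (2 * √x) * (1 - γ)⁻¹ ^ 2)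
        + 2 * (γ * (2 * √x) / (2 * (1 - γ) ^ 2)) ^ 2 := by linarith
    _ = 2 * localVar Ptilde (Vval γ Ptilde π r) sa + 6 / (1 - γ) ^ 2 * √x
        + 2 * γ ^ 2 / (1 - γ) ^ 4 * x := by
        field_simp
        rw [Real.sq_sqrt hx]
        ring
    _ ≤ _ := by gcongr; norm_num

theorem stmt_5 {S A : Type*} [Fintype S] [Fintype A] [DecidableEq S] [DecidableEq A]
    [Nonempty S] [Nonempty A]
    (γ : ℝ) (hγ : γ ∈ Set.Ico (0:ℝ) 1)
    (r : S × A → ℝ) (hr : ∀ sa, r sa ∈ Set.Icc (0:ℝ) 1)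
    (n : ℕ) (hn : 1 ≤ n) (δ : ℝ) (hδ : δ ∈ Set.Ioo (0:ℝ) 1)
    (P Ptilde : S × A → S → ℝ) (hP : IsKernel P) (hPt : IsKernel Ptilde)
    (hclose : ∀ sa : S × A, ∑ s', |P sa s' - Ptilde sa s'| ≤
      2 * Real.sqrt (Real.log (2 / δ) / (2 * n)))
    (π : S → A → ℝ) (hπ : IsPolicy π) :
    ∀ sa : S × A, localVar P (Vval γ P π r) sa ≤
      2 * localVar Ptilde (Vval γ Ptilde π r) sa
      + (6 / (1 - γ) ^ 2) * Real.sqrt (Real.log (2 / δ) / (2 * n))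
      + (8 * γ ^ 2 / (1 - γ) ^ 4) * (Real.log (2 / δ) / (2 * n)) :=
  stmt_5_general γ hγ r hr n δ hδ P Ptilde hP hPt hclose π hπ
end

section
/- Let m ≥ 1 be an integer, R > 0, β > 0, ε > 0. Let Z be any set and f : Z → ℝ^m → ℝ be such that for every z ∈ Z the map y ↦ f(z, y) is β-Lipschitz with respect to the ℓ∞ norm on ℝ^m. Let T ≥ 1, let y₁, …, y_T lie in a closed ℓ∞-ball of radius R in ℝ^m, and let z₁, …, z_T ∈ Z satisfy f(z_t, y_t) > ε for every 1 ≤ t ≤ T and f(z_t, y_{t'}) ≤ 0 for all 1 ≤ t' < t ≤ T. Then ‖y_t − y_{t'}‖_∞ > ε/β for all t ≠ t', and consequently T ≤ (2Rβ/ε + 1)^m. -/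
/-!
A point where `f (z t)` exceeds `ε` and a point where it is nonpositive differ in value by more
than `ε`, so by the Lipschitz bound they are more than `ε / β` apart; the hypotheses supply such a
pair for every two indices. Cutting the cube `closedBall c R` into a grid of half-open cells of side
`δ = ε / β` (about `2R/δ + 1` of them per coordinate), two points in the same cell are less than
`δ` apart, so distinct points lie in distinct cells.
-/

open Finset Metric

lemma abs_sub_lt_one_of_natFloor_eq {R : Type*} [Ring R] [LinearOrder R] [IsOrderedRing R]
    [FloorRing R] {a b : R} (ha : 0 ≤ a) (hb : 0 ≤ b) (h : ⌊a⌋₊ = ⌊b⌋₊) : |a - b| < 1 :=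
  Int.abs_sub_lt_one_of_floor_eq_floor <| by
    rw [← Int.natCast_floor_eq_floor ha, ← Int.natCast_floor_eq_floor hb, h]

lemma div_lt_norm_sub_of_abs_sub_le {E : Type*} [SeminormedAddCommGroup E] {g : E → ℝ}
    {β ε : ℝ} (hβ : 0 < β) {u v : E} (hg : |g u - g v| ≤ β * ‖u - v‖) (hu : ε < g u)
    (hv : g v ≤ 0) : ε / β < ‖u - v‖ := by
  rw [div_lt_iff₀ hβ, mul_comm]
  calc ε < g u - g v := by linarith
    _ ≤ |g u - g v| := le_abs_self _
    _ ≤ β * ‖u - v‖ := hg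

section Grid

variable {n : Type*} [Fintype n] {c u v : n → ℝ} {R δ : ℝ}

lemma abs_sub_le_of_mem_closedBall_pi (hu : u ∈ closedBall c R) (j : n) : |u j - c j| ≤ R :=
  (Real.dist_eq (u j) (c j) ▸ dist_le_pi_dist u c j).trans hu

noncomputable def gridCell (c : n → ℝ) (R δ : ℝ) (u : n → ℝ) : n → ℕ :=
  fun j => ⌊(u j - c j + R) / δ⌋₊

lemma gridCell_mem_piFinset [DecidableEq n] (hδ : 0 ≤ δ) (hu : u ∈ closedBall c R) :
    gridCell c R δ u ∈ Fintype.piFinset fun _ => range (⌊2 * R / δ⌋₊ + 1) := by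
  refine Fintype.mem_piFinset.2 fun j => mem_range.2 <| Nat.lt_succ_of_le <| Nat.floor_le_floor ?_
  have := (abs_le.1 (abs_sub_le_of_mem_closedBall_pi hu j)).2
  gcongr
  linarith

lemma norm_sub_lt_of_gridCell_eq (hδ : 0 < δ) (hu : u ∈ closedBall c R)
    (hv : v ∈ closedBall c R) (h : gridCell c R δ u = gridCell c R δ v) : ‖u - v‖ < δ := by
  refine (pi_norm_lt_iff hδ).2 fun j => ?_
  have hu' := (abs_le.1 (abs_sub_le_of_mem_closedBall_pi hu j)).1
  have hv' := (abs_le.1 (abs_sub_le_of_mem_closedBall_pi hv j)).1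
  have := abs_sub_lt_one_of_natFloor_eq
    (div_nonneg (by linarith) hδ.le) (div_nonneg (by linarith) hδ.le) (congrFun h j)
  rwa [← sub_div, abs_div, abs_of_pos hδ, div_lt_one hδ, add_sub_add_right_eq_sub,
    sub_sub_sub_cancel_right] at this

theorem card_le_of_pairwise_le_norm_sub {ι : Type*} [Fintype ι] (hR : 0 ≤ R) (hδ : 0 < δ)
    {y : ι → n → ℝ} (hy : ∀ i, y i ∈ closedBall c R)
    (hsep : Pairwise fun i i' => δ ≤ ‖y i - y i'‖) :
    (Fintype.card ι : ℝ) ≤ (2 * R / δ + 1) ^ Fintype.card n := by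
  classical
  have hcard : Fintype.card ι ≤ (⌊2 * R / δ⌋₊ + 1) ^ Fintype.card n := by
    simpa using card_le_card_of_injOn (s := univ) (fun i => gridCell c R δ (y i))
      (fun i _ => gridCell_mem_piFinset hδ.le (hy i))
      (fun i _ i' _ h => by_contra fun hne =>
        (hsep hne).not_gt (norm_sub_lt_of_gridCell_eq hδ (hy i) (hy i') h))
  calc (Fintype.card ι : ℝ) ≤ ((⌊2 * R / δ⌋₊ + 1 : ℕ) : ℝ) ^ Fintype.card n := by
        exact_mod_cast hcard
    _ ≤ (2 * R / δ + 1) ^ Fintype.card n := by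
        push_cast
        gcongr
        exact Nat.floor_le (by positivity)

end Grid

theorem stmt_9_general (m : ℕ) (R β ε : ℝ) (hR : 0 < R) (hβ : 0 < β) (hε : 0 < ε)
    {Z : Type*} (f : Z → (Fin m → ℝ) → ℝ)
    (hf : ∀ z y y', |f z y - f z y'| ≤ β * ‖y - y'‖)
    (T : ℕ) (c : Fin m → ℝ)
    (y : Fin T → Fin m → ℝ) (hy : ∀ t, y t ∈ Metric.closedBall c R)
    (z : Fin T → Z)
    (h1 : ∀ t, ε < f (z t) (y t))
    (h2 : ∀ t t' : Fin T, t' < t → f (z t) (y t') ≤ 0) :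
    (∀ t t' : Fin T, t ≠ t' → ε / β < ‖y t - y t'‖) ∧
      (T : ℝ) ≤ (2 * R * β / ε + 1) ^ m := by
  have hsep (t t' : Fin T) (h : t' < t) : ε / β < ‖y t - y t'‖ :=
    div_lt_norm_sub_of_abs_sub_le hβ (hf _ _ _) (h1 t) (h2 t t' h)
  have hsep' (t t' : Fin T) (hne : t ≠ t') : ε / β < ‖y t - y t'‖ := by
    rcases hne.lt_or_gt with h | h
    · exact norm_sub_rev (y t') (y t) ▸ hsep t' t h
    · exact hsep t t' h
  refine ⟨hsep', ?_⟩
  simpa [div_div_eq_mul_div] using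
    card_le_of_pairwise_le_norm_sub hR.le (div_pos hε hβ) hy fun t t' hne => (hsep' t t' hne).le

theorem stmt_9 (m : ℕ) (hm : 1 ≤ m) (R β ε : ℝ) (hR : 0 < R) (hβ : 0 < β) (hε : 0 < ε)
    {Z : Type*} (f : Z → (Fin m → ℝ) → ℝ)
    (hf : ∀ z y y', |f z y - f z y'| ≤ β * ‖y - y'‖)
    (T : ℕ) (hT : 1 ≤ T) (c : Fin m → ℝ)
    (y : Fin T → Fin m → ℝ) (hy : ∀ t, y t ∈ Metric.closedBall c R)
    (z : Fin T → Z)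
    (h1 : ∀ t, ε < f (z t) (y t))
    (h2 : ∀ t t' : Fin T, t' < t → f (z t) (y t') ≤ 0) :
    (∀ t t' : Fin T, t ≠ t' → ε / β < ‖y t - y t'‖) ∧
      (T : ℝ) ≤ (2 * R * β / ε + 1) ^ m :=
  stmt_9_general m R β ε hR hβ hε f hf T c y hy z h1 h2
end
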